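/- Let t and r be positive integers, let d be a positive integer and e an integer with 0 ≤ e < d, and suppose the standard pattern T(d,e) = {(dx+ey, y) : x, y ∈ ℤ} is a (t,r) broadcast. Then d ≤ U(t,r)/r, where U(t,r) = ∑_{v ∈ ℤ×ℤ, dist(v,(0,0)) < t} min(t − dist(v,(0,0)), r) is the usable signal emitted by a single tower of strength t. -/

import Mathlib

open Filter Topology

/-- Graph (L¹) distance on the infinite grid ℤ×ℤ. -/
def gridDist (u v : ℤ × ℤ) : ℕ := (u.1 - v.1).natAbs + (u.2 - v.2).natAbs

open Classical in
/-- Total signal received at `v` from towers of strength `t` located at the points of `S`: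
the finite sum `∑_{T ∈ S, dist(v,T) < t} (t − dist(v,T))`. -/
noncomputable def totalSignal (t : ℕ) (S : Set (ℤ × ℤ)) (v : ℤ × ℤ) : ℕ :=
  ∑ T ∈ (Finset.Icc (v.1 - (t : ℤ)) (v.1 + (t : ℤ)) ×ˢ
      Finset.Icc (v.2 - (t : ℤ)) (v.2 + (t : ℤ))).filter
      (fun T => T ∈ S ∧ gridDist v T < t),
    (t - gridDist v T)

/-- `S` is a `(t,r)` broadcast if every vertex receives total signal at least `r`. -/
def IsBroadcast (t r : ℕ) (S : Set (ℤ × ℤ)) : Prop :=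
  ∀ v : ℤ × ℤ, r ≤ totalSignal t S v

/-- The standard pattern `T(d,e) = {(dx+ey, y) : x, y ∈ ℤ}`. -/
def stdPattern (d e : ℤ) : Set (ℤ × ℤ) := {p | ∃ x y : ℤ, p = (d * x + e * y, y)}

open Classical in
/-- The number of points of `S` in the square `V_n = {(a,b) : |a| ≤ n, |b| ≤ n}`. -/
noncomputable def gridCount (S : Set (ℤ × ℤ)) (n : ℕ) : ℕ :=
  ((Finset.Icc (-(n : ℤ)) (n : ℤ) ×ˢ Finset.Icc (-(n : ℤ)) (n : ℤ)).filter
    (fun v => v ∈ S)).card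

/-- The usable signal `U(t,r) = ∑_{v, dist(v,0) < t} min(t − dist(v,0), r)`. -/
noncomputable def usableSignal (t r : ℕ) : ℕ :=
  ∑ v ∈ (Finset.Icc (-(t : ℤ)) (t : ℤ) ×ˢ Finset.Icc (-(t : ℤ)) (t : ℤ)).filter
      (fun v => gridDist v (0, 0) < t),
    min (t - gridDist v (0, 0)) r


/-!
Each of the `d` vertices `(a, 0)`, `0 ≤ a < d`, receives signal at least `r`; truncating every
tower's contribution at `r` keeps this true. Translating each vertex to the origin turns these
contributions into values `min (t - |u|) r` at offsets `u` of the ball of radius `t`, and since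
the pattern contains no vector `(c, 0)` with `0 < |c| < d`, no offset is used twice.
Summing, `d * r ≤ U(t, r)`.
-/

open Finset

noncomputable def gridBall (t : ℕ) : Finset (ℤ × ℤ) :=
  (Icc (-(t : ℤ)) t ×ˢ Icc (-(t : ℤ)) t).filter (fun v => gridDist v (0, 0) < t)

lemma usableSignal_eq_sum_gridBall (t r : ℕ) :
    usableSignal t r = ∑ u ∈ gridBall t, min (t - gridDist u (0, 0)) r :=
  rfl

lemma gridDist_eq_gridDist_sub (u v : ℤ × ℤ) : gridDist u v = gridDist (u - v) (0, 0) := by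
  simp [gridDist]

lemma Finset.min_sum_le_sum_min {ι : Type*} (s : Finset ι) (f : ι → ℕ) (r : ℕ) :
    min (∑ i ∈ s, f i) r ≤ ∑ i ∈ s, min (f i) r := by
  classical
  induction s using Finset.induction with
  | empty => simp
  | insert a s ha ih =>
    rw [sum_insert ha, sum_insert ha]
    omega

open Classical in
lemma totalSignal_eq_sum_gridBall (t : ℕ) (S : Set (ℤ × ℤ)) (v : ℤ × ℤ) :
    totalSignal t S v =
      ∑ u ∈ (gridBall t).filter (fun u => v - u ∈ S), (t - gridDist u (0, 0)) := by
  obtain ⟨v₁, v₂⟩ := v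
  refine sum_nbij' (fun T => (v₁, v₂) - T) (fun u => (v₁, v₂) - u) ?_ ?_ (by simp) (by simp) ?_
  · rintro ⟨T₁, T₂⟩ hT
    rw [mem_filter] at hT
    simp only [gridBall, mem_filter, mem_product, mem_Icc, gridDist, Prod.mk_sub_mk,
      sub_zero, sub_sub_cancel] at hT ⊢
    obtain ⟨hbox, hS, hdist⟩ := hT
    exact ⟨⟨by omega, hdist⟩, hS⟩
  · rintro ⟨u₁, u₂⟩ hu
    rw [mem_filter]
    simp only [gridBall, mem_filter, mem_product, mem_Icc, gridDist, Prod.mk_sub_mk,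
      sub_zero, sub_sub_cancel] at hu ⊢
    obtain ⟨⟨hbox, hdist⟩, hS⟩ := hu
    exact ⟨by omega, hS, hdist⟩
  · intro T _
    rw [gridDist_eq_gridDist_sub]

open Classical in
lemma le_sum_min_of_le_totalSignal {t r : ℕ} {S : Set (ℤ × ℤ)} {v : ℤ × ℤ}
    (h : r ≤ totalSignal t S v) :
    r ≤ ∑ u ∈ (gridBall t).filter (fun u => v - u ∈ S), min (t - gridDist u (0, 0)) r :=
  calc r = min (totalSignal t S v) r := (min_eq_right h).symm
    _ ≤ _ := by
      rw [totalSignal_eq_sum_gridBall]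
      exact min_sum_le_sum_min _ _ r

/-- The truncated signals received at the points of `A` use disjoint parts of the usable signal
of a single tower. -/
lemma card_mul_le_usableSignal {t r : ℕ} {S : Set (ℤ × ℤ)} (hS : IsBroadcast t r S)
    (A : Finset (ℤ × ℤ)) (hA : ∀ u, ∀ a ∈ A, ∀ b ∈ A, a - u ∈ S → b - u ∈ S → a = b) :
    #A * r ≤ usableSignal t r := by
  classical
  set f : ℤ × ℤ → ℕ := fun u => min (t - gridDist u (0, 0)) r
  calc #A * r = ∑ _a ∈ A, r := by rw [sum_const, smul_eq_mul]
    _ ≤ ∑ a ∈ A, ∑ u ∈ (gridBall t).filter (fun u => a - u ∈ S), f u :=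
        sum_le_sum fun a _ => le_sum_min_of_le_totalSignal (hS a)
    _ = ∑ u ∈ gridBall t, ∑ _a ∈ A.filter (fun a => a - u ∈ S), f u :=
        sum_comm' fun a u => by simp only [mem_filter]; tauto
    _ ≤ ∑ u ∈ gridBall t, f u := sum_le_sum fun u _ => by
        rw [sum_const, smul_eq_mul]
        refine mul_le_of_le_one_left (Nat.zero_le _) (card_le_one.2 fun a ha b hb => ?_)
        rw [mem_filter] at ha hb
        exact hA u a ha.1 b hb.1 ha.2 hb.2
    _ = usableSignal t r := (usableSignal_eq_sum_gridBall t r).symm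

lemma mem_stdPattern_iff {d e : ℤ} {p : ℤ × ℤ} : p ∈ stdPattern d e ↔ d ∣ p.1 - e * p.2 := by
  constructor
  · rintro ⟨x, y, rfl⟩
    exact ⟨x, by ring⟩
  · rintro ⟨x, hx⟩
    exact ⟨x, p.2, Prod.ext (by linarith) rfl⟩

lemma eq_of_sub_mem_stdPattern {d e a b : ℤ} (ha : a ∈ Ico 0 d) (hb : b ∈ Ico 0 d)
    (u : ℤ × ℤ) (hau : (a, 0) - u ∈ stdPattern d e) (hbu : (b, 0) - u ∈ stdPattern d e) :
    a = b := by
  rw [mem_stdPattern_iff] at hau hbu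
  have hdvd : d ∣ a - b := by simpa using dvd_sub hau hbu
  rw [mem_Ico] at ha hb
  exact sub_eq_zero.1 (Int.eq_zero_of_abs_lt_dvd hdvd (abs_sub_lt_iff.2 ⟨by omega, by omega⟩))

theorem stmt19_general (t r : ℕ) (hr : 0 < r) (d e : ℤ) (hbr : IsBroadcast t r (stdPattern d e)) :
    (d : ℝ) ≤ (usableSignal t r : ℝ) / (r : ℝ) := by
  have hrow := card_mul_le_usableSignal hbr ((Ico 0 d).map (Function.Embedding.sectL ℤ 0)) <| by
    simp only [Finset.mem_map, Function.Embedding.sectL_apply]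
    rintro u _ ⟨a, ha, rfl⟩ _ ⟨b, hb, rfl⟩ hau hbu
    rw [eq_of_sub_mem_stdPattern ha hb u hau hbu]
  rw [card_map, Int.card_Ico, sub_zero] at hrow
  rw [le_div_iff₀ (by exact_mod_cast hr)]
  calc (d : ℝ) * r ≤ d.toNat * r := by gcongr; exact_mod_cast Int.self_le_toNat d
    _ ≤ usableSignal t r := by exact_mod_cast hrow

theorem stmt19 (t r : ℕ) (ht : 0 < t) (hr : 0 < r) (d e : ℤ) (hd : 0 < d)
    (he0 : 0 ≤ e) (hed : e < d) (hbr : IsBroadcast t r (stdPattern d e)) :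
    (d : ℝ) ≤ (usableSignal t r : ℝ) / (r : ℝ) :=
  stmt19_general t r hr d e hbr
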